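/- Let G be a strongly connected digraph with a fixed start vertex s, let (x,y) be an edge inserted into G, and let z = nca(x,y) be the nearest common ancestor of x and y in the dominator tree D of G_s. A vertex v ≠ s is affected by the insertion if and only if depth(z) < depth(d(v)) and there is a path π in G from y to v such that depth(d(v)) < depth(w) for every vertex w on π. Moreover, if v is affected, then the immediate dominator of v in (G+(x,y))_s equals z. -/

import Mathlib

/-!  Basic notions for finite directed graphs given by an edge set `E : Set (V × V)`. -/

variable {V : Type*}

/-- A path from `u` to `v`: a nonempty list of vertices starting at `u`, ending at `v`,
in which every pair of consecutive vertices is an edge. -/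
def IsPath (E : Set (V × V)) (u v : V) (p : List V) : Prop :=
  p.Chain' (fun a b => (a, b) ∈ E) ∧ p.head? = some u ∧ p.getLast? = some v

/-- `v` is reachable from `u` by a path. -/
def Reach (E : Set (V × V)) (u v : V) : Prop := ∃ p, IsPath E u v p

/-- Every vertex reaches every other vertex. -/
def StronglyConnected (E : Set (V × V)) : Prop := ∀ u v, Reach E u v

/-- An edge `e` is a strong bridge if its removal destroys strong connectivity. -/
def StrongBridge (E : Set (V × V)) (e : V × V) : Prop :=
  e ∈ E ∧ ¬ StronglyConnected (E \ {e})

/-- `u` dominates `v` in the flow graph with start vertex `s`: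
every path from `s` to `v` contains `u`. -/
def Dominates (E : Set (V × V)) (s u v : V) : Prop :=
  ∀ p, IsPath E s v p → u ∈ p

/-- An edge `e = (e.1, e.2)` is a bridge of the flow graph `G_s`:
every path from `s` to `e.2` contains the edge `e`. -/
def FlowBridge (E : Set (V × V)) (s : V) (e : V × V) : Prop :=
  e ∈ E ∧ ∀ p, IsPath E s e.2 p → [e.1, e.2] <:+: p

/-- The reverse digraph: all edges reversed. -/
def rev (E : Set (V × V)) : Set (V × V) := {e | (e.2, e.1) ∈ E}

/-- `D(v)`: the set of vertices dominated by `v` in `G_s`. -/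
def Dset (E : Set (V × V)) (s v : V) : Set V := {w | Dominates E s v w}

/-- Reachability inside the induced subgraph `G[S]`: a path all of whose vertices lie in `S`. -/
def ReachableIn (E : Set (V × V)) (S : Set V) (u v : V) : Prop :=
  ∃ p, IsPath E u v p ∧ ∀ w ∈ p, w ∈ S

/-- `C` is a strongly connected component of the induced subgraph `G[S]`. -/
def SCCIn (E : Set (V × V)) (S : Set V) (C : Set V) : Prop :=
  C.Nonempty ∧ C ⊆ S ∧
  (∀ u ∈ C, ∀ v ∈ C, ReachableIn E S u v) ∧
  (∀ v ∈ S, ∀ u ∈ C, ReachableIn E S u v → ReachableIn E S v u → v ∈ C)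

/-- A bridge-dominated component: an SCC of `G[D(v)]` for some bridge `(u,v)` of `G_s`. -/
def BridgeDomComponent (E : Set (V × V)) (s : V) (C : Set V) : Prop :=
  ∃ u v, FlowBridge E s (u, v) ∧ SCCIn E (Dset E s v) C

/-- The set of edges used by a path `p`. -/
def pathEdges (p : List V) : Set (V × V) := {e | [e.1, e.2] <:+: p}

/-- `u` and `v` are `2`-edge-connected: there are two edge-disjoint paths from `u` to `v`
and two edge-disjoint paths from `v` to `u`. -/
def TwoEdgeConnected (E : Set (V × V)) (u v : V) : Prop :=
  (∃ p q, IsPath E u v p ∧ IsPath E u v q ∧ pathEdges p ∩ pathEdges q = ∅) ∧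
  (∃ p q, IsPath E v u p ∧ IsPath E v u q ∧ pathEdges p ∩ pathEdges q = ∅)

/-- `u` is the immediate dominator of `v` in `G_s`: a proper dominator of `v`
dominated by every proper dominator of `v`. -/
def ImmDom (E : Set (V × V)) (s u v : V) : Prop :=
  Dominates E s u v ∧ u ≠ v ∧
  ∀ w, Dominates E s w v → w ≠ v → Dominates E s w u

/-- `depth v = |Dom(v)|`, the number of dominators of `v` in `G_s`. -/
noncomputable def depth (E : Set (V × V)) (s v : V) : ℕ :=
  {u | Dominates E s u v}.ncard

/-- `z` is the nearest common ancestor of `x` and `y` in the dominator tree of `G_s`: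
a common dominator of `x` and `y` dominated by every common dominator. -/
def IsNCA (E : Set (V × V)) (s x y z : V) : Prop :=
  Dominates E s z x ∧ Dominates E s z y ∧
  ∀ w, Dominates E s w x → Dominates E s w y → Dominates E s w z

/-- `r` is the bridge-decomposition root of `v` in `G_s`: the deepest dominator `r`
of `v` such that `r = s` or `(d(r), r)` is a bridge of `G_s`. -/
def IsBDRoot (E : Set (V × V)) (s v r : V) : Prop :=
  Dominates E s r v ∧
  (r = s ∨ ∃ u, ImmDom E s u r ∧ FlowBridge E s (u, r)) ∧
  ∀ r', Dominates E s r' v →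
    (r' = s ∨ ∃ u', ImmDom E s u' r' ∧ FlowBridge E s (u', r')) →
    Dominates E s r' r

/-!
Write `G'` for `G + (x, y)`. A path of `G'` that is not a path of `G` contains a path of `G` from
its start to `x` and one from `y` to its end. Since every proper dominator of `v` in `G'` is one
in `G`, `v` is affected exactly when `d(v)` stops dominating `v`, i.e. when paths of `G` from `s`
to `x` and from `y` to `v` avoid `d(v)`. Every vertex `w` on the second path is then properly
dominated by `d(v)`, as a path `s ⇝ w` avoiding `d(v)` would continue to `v`; so `d(v)`
dominates `y` but not `x`, and `z` properly dominates `d(v)`. Conversely, a `d(v)` deeper than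
`z` cannot dominate both `x` and `y`, so in `G'` some path reaches `y` avoiding `d(v)` and
continues along the deep path to `v`. Finally a proper dominator of `v` in `G'` dominates
`d(v)`, so it avoids the deep path and must dominate `y` in `G'`, hence `x` in `G`; as a common
dominator of `x` and `y` it dominates `z`.
-/

theorem isPath_iff {E : Set (V × V)} {a b : V} {p : List V} :
    IsPath E a b p ↔ p.IsChain (fun a b => (a, b) ∈ E) ∧ p.head? = some a ∧ p.getLast? = some b :=
  Iff.rfl

namespace IsPath

variable {E : Set (V × V)} {a b c d : V} {p : List V}

theorem not_nil : ¬ IsPath E a b [] := by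
  simp [isPath_iff]

theorem singleton_iff : IsPath E a b [c] ↔ a = c ∧ b = c := by
  simp [isPath_iff, eq_comm]

theorem cons_cons_iff {t : List V} :
    IsPath E a b (c :: d :: t) ↔ a = c ∧ (c, d) ∈ E ∧ IsPath E d b (d :: t) := by
  simp only [isPath_iff, List.isChain_cons_cons, List.head?_cons, Option.some.injEq,
    List.getLast?_cons_cons, true_and]
  tauto

theorem head_mem (h : IsPath E a b p) : a ∈ p :=
  List.mem_of_mem_head? h.2.1

theorem last_mem (h : IsPath E a b p) : b ∈ p :=
  List.mem_of_mem_getLast? h.2.2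

theorem mono {E' : Set (V × V)} (hE : E ⊆ E') (h : IsPath E a b p) : IsPath E' a b p :=
  ⟨h.1.imp fun _ _ hab => hE hab, h.2⟩

theorem cons (hab : (a, b) ∈ E) (h : IsPath E b c p) : IsPath E a c (a :: p) := by
  cases p with
  | nil => exact absurd h not_nil
  | cons d t =>
    obtain rfl : d = b := Option.some_injective _ h.2.1
    exact cons_cons_iff.2 ⟨rfl, hab, h⟩

theorem append {q : List V} (hp : IsPath E a b p) (hq : IsPath E b c q) :
    ∃ r, IsPath E a c r ∧ r ⊆ p ++ q := by
  induction p generalizing a with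
  | nil => exact absurd hp not_nil
  | cons e t ih =>
    cases t with
    | nil =>
      obtain ⟨rfl, rfl⟩ := singleton_iff.1 hp
      exact ⟨q, hq, List.subset_append_right _ _⟩
    | cons f t =>
      obtain ⟨rfl, hef, hrest⟩ := cons_cons_iff.1 hp
      obtain ⟨r, hr, hsub⟩ := ih hrest
      exact ⟨a :: r, hr.cons hef, List.cons_subset_cons _ hsub⟩

theorem exists_prefix (h : IsPath E a b p) (hc : c ∈ p) :
    ∃ q, IsPath E a c q ∧ q <+: p := by
  induction p generalizing a with
  | nil => exact absurd h not_nil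
  | cons e t ih =>
    cases t with
    | nil =>
      obtain ⟨rfl, rfl⟩ := singleton_iff.1 h
      obtain rfl := List.mem_singleton.1 hc
      exact ⟨_, h, List.prefix_refl _⟩
    | cons f t =>
      obtain ⟨rfl, hef, hrest⟩ := cons_cons_iff.1 h
      by_cases hca : c = a
      · subst hca
        exact ⟨[c], singleton_iff.2 ⟨rfl, rfl⟩, by simp⟩
      · obtain ⟨q, hq, hpre⟩ := ih hrest (List.mem_of_ne_of_mem hca hc)
        exact ⟨a :: q, hq.cons hef, List.cons_prefix_cons.2 ⟨rfl, hpre⟩⟩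

theorem exists_suffix (h : IsPath E a b p) (hc : c ∈ p) :
    ∃ q, IsPath E c b (c :: q) ∧ c :: q <:+ p ∧ c ∉ q := by
  induction p generalizing a with
  | nil => exact absurd h not_nil
  | cons e t ih =>
    cases t with
    | nil =>
      obtain ⟨rfl, rfl⟩ := singleton_iff.1 h
      obtain rfl := List.mem_singleton.1 hc
      exact ⟨[], h, List.suffix_refl _, List.not_mem_nil⟩
    | cons f t =>
      obtain ⟨rfl, -, hrest⟩ := cons_cons_iff.1 h
      by_cases hct : c ∈ f :: t
      · obtain ⟨q, hq, hsub, hcq⟩ := ih hrest hct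
        exact ⟨q, hq, hsub.trans (List.suffix_cons _ _), hcq⟩
      · obtain rfl : c = a := (List.mem_cons.1 hc).resolve_right hct
        exact ⟨f :: t, h, List.suffix_refl _, hct⟩

theorem insert_cases {x y : V} (h : IsPath (insert (x, y) E) a b p) :
    (∃ q, IsPath E a b q ∧ q ⊆ p) ∨
      (∃ q, IsPath E a x q ∧ q ⊆ p) ∧ ∃ q, IsPath E y b q ∧ q ⊆ p := by
  induction p generalizing a with
  | nil => exact absurd h not_nil
  | cons e t ih =>
    cases t with
    | nil =>
      obtain ⟨rfl, rfl⟩ := singleton_iff.1 h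
      exact .inl ⟨_, singleton_iff.2 ⟨rfl, rfl⟩, List.Subset.refl _⟩
    | cons f t =>
      obtain ⟨rfl, hef, hrest⟩ := cons_cons_iff.1 h
      have to_x (hax : a = x) : ∃ q, IsPath E a x q ∧ q ⊆ a :: f :: t :=
        ⟨[a], singleton_iff.2 ⟨rfl, hax.symm⟩, by simp⟩
      rcases ih hrest with ⟨q, hq, hsub⟩ | ⟨⟨q, hq, hsub⟩, ⟨q', hq', hsub'⟩⟩
      · rcases Set.mem_insert_iff.1 hef with hxy | hE
        · obtain ⟨rfl, rfl⟩ := Prod.ext_iff.1 hxy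
          exact .inr ⟨to_x rfl, q, hq, List.subset_cons_of_subset _ hsub⟩
        · exact .inl ⟨a :: q, hq.cons hE, List.cons_subset_cons _ hsub⟩
      · refine .inr ⟨?_, q', hq', List.subset_cons_of_subset _ hsub'⟩
        rcases Set.mem_insert_iff.1 hef with hxy | hE
        · exact to_x (Prod.ext_iff.1 hxy).1
        · exact ⟨a :: q, hq.cons hE, List.cons_subset_cons _ hsub⟩

end IsPath

theorem StronglyConnected.mono {E E' : Set (V × V)} (hE : E ⊆ E') (h : StronglyConnected E) :
    StronglyConnected E' := fun u v =>
  (h u v).imp fun _ hp => hp.mono hE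

namespace Dominates

variable {E : Set (V × V)} {s u v w : V}

theorem refl (v : V) : Dominates E s v v := fun _ hp => hp.last_mem

theorem trans (huw : Dominates E s u w) (hwv : Dominates E s w v) : Dominates E s u v := by
  intro p hp
  obtain ⟨q, hq, hpre⟩ := hp.exists_prefix (hwv p hp)
  exact hpre.subset (huw q hq)

theorem of_superset {E' : Set (V × V)} (hE : E ⊆ E') (h : Dominates E' s u v) :
    Dominates E s u v := fun p hp => h p (hp.mono hE)

theorem of_isPath_not_mem {p : List V} (h : Dominates E s w v) (hp : IsPath E u v p)
    (hw : w ∉ p) : Dominates E s w u := by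
  intro q hq
  obtain ⟨r, hr, hsub⟩ := hq.append hp
  exact (List.mem_append.1 (hsub (h r hr))).resolve_right hw

theorem antisymm (hu : Reach E s u) (huw : Dominates E s u w) (hwu : Dominates E s w u) :
    u = w := by
  by_contra hne
  obtain ⟨p, hp⟩ := hu
  -- the prefix of a path `s ⇝ u` up to `w`, cut again at `u`, is a strictly shorter one
  induction hlen : p.length using Nat.strong_induction_on generalizing p with
  | _ n ih =>
    obtain ⟨q, hq, hqp⟩ := hp.exists_prefix (hwu p hp)
    obtain ⟨r, hr, hrq⟩ := hq.exists_prefix (huw q hq)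
    have hq_ne : q ≠ p := by
      rintro rfl
      exact hne (Option.some_injective _ (hp.2.2.symm.trans hq.2.2))
    have hr_ne : r ≠ q := by
      rintro rfl
      exact hne (Option.some_injective _ (hr.2.2.symm.trans hq.2.2))
    have hlt : r.length < n := by
      have h1 := hqp.length_le
      have h2 := hrq.length_le
      have h3 : q.length ≠ p.length := fun h => hq_ne (hqp.eq_of_length h)
      have h4 : r.length ≠ q.length := fun h => hr_ne (hrq.eq_of_length h)
      omega
    exact ih _ hlt r hr rfl

theorem total (hu : Dominates E s u v) (hw : Dominates E s w v) (hv : Reach E s v) :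
    Dominates E s u w ∨ Dominates E s w u := by
  obtain ⟨p, hp⟩ := hv
  obtain ⟨q, hq, -, hwq⟩ := hp.exists_suffix (hw p hp)
  by_cases huq : u ∈ q
  · obtain ⟨q', hq', hsuf, -⟩ := hq.exists_suffix (List.mem_cons_of_mem _ huq)
    have hwq' : w ∉ u :: q' := by
      rcases List.suffix_cons_iff.1 hsuf with heq | hsuf
      · exact absurd (List.head_eq_of_cons_eq heq ▸ huq) hwq
      · exact fun hw' => hwq (hsuf.mem hw')
    exact .inr (hw.of_isPath_not_mem hq' hwq')
  · by_cases huw : u = w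
    · exact .inl (huw ▸ refl u)
    · exact .inl (hu.of_isPath_not_mem hq (List.not_mem_cons_of_ne_of_not_mem huw huq))

end Dominates

section Depth

variable {E : Set (V × V)} {s u w : V}

theorem dominators_finite (hw : Reach E s w) : {a | Dominates E s a w}.Finite := by
  obtain ⟨p, hp⟩ := hw
  exact p.finite_toSet.subset fun _ ha => ha p hp

theorem depth_le_depth (h : Dominates E s u w) (hw : Reach E s w) :
    depth E s u ≤ depth E s w :=
  Set.ncard_le_ncard (fun _ ha => Dominates.trans ha h) (dominators_finite hw)

theorem depth_lt_depth (h : Dominates E s u w) (hne : u ≠ w) (hu : Reach E s u)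
    (hw : Reach E s w) : depth E s u < depth E s w := by
  refine Set.ncard_lt_ncard ⟨fun _ ha => Dominates.trans ha h, fun hsub => ?_⟩
    (dominators_finite hw)
  exact hne (Dominates.antisymm hu h (hsub (Dominates.refl w)))

end Depth

theorem ImmDom.of_superset {E E' : Set (V × V)} {s d v : V} (hE : E ⊆ E') (h : ImmDom E s d v)
    (hd' : Dominates E' s d v) (hd : Reach E s d) (hv : Reach E' s v) : ImmDom E' s d v := by
  refine ⟨hd', h.2.1, fun w hw hwv => ?_⟩
  rcases hw.total hd' hv with hwd | hdw
  · exact hwd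
  · obtain rfl : d = w :=
      Dominates.antisymm hd (hdw.of_superset hE) (h.2.2 w (hw.of_superset hE) hwv)
    exact Dominates.refl d

section Insert

variable {E : Set (V × V)} {s x y u w : V}

theorem Dominates.insert_edge (hu : Dominates E s w u) (hx : Dominates E s w x) :
    Dominates (insert (x, y) E) s w u := by
  intro p hp
  rcases hp.insert_cases with ⟨q, hq, hsub⟩ | ⟨⟨q, hq, hsub⟩, -⟩
  · exact hsub (hu q hq)
  · exact hsub (hx q hq)

theorem Dominates.of_insert_snd (h : Dominates (insert (x, y) E) s w y) (hwy : w ≠ y) :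
    Dominates E s w x := by
  intro p hp
  obtain ⟨r, hr, hsub⟩ := (hp.mono (Set.subset_insert _ _)).append
    (IsPath.cons (Set.mem_insert _ _) (IsPath.singleton_iff.2 ⟨rfl, rfl⟩) :
      IsPath (insert (x, y) E) x y [x, y])
  rcases List.mem_append.1 (hsub (h r hr)) with hwp | hwxy
  · exact hwp
  · rcases List.mem_pair.1 hwxy with rfl | rfl
    · exact hp.last_mem
    · exact absurd rfl hwy

end Insert

section Affected

variable {E : Set (V × V)} {s x y z d v : V}

theorem exists_deep_path_of_not_dominates_insert (hd : Dominates E s d v)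
    (hnd : ¬ Dominates (insert (x, y) E) s d v) :
    ¬ Dominates E s d x ∧
      ∃ p, IsPath E y v p ∧ ∀ w ∈ p, Dominates E s d w ∧ d ≠ w := by
  obtain ⟨P, hP, hdP⟩ : ∃ P, IsPath (insert (x, y) E) s v P ∧ d ∉ P := by
    simpa [Dominates] using hnd
  rcases hP.insert_cases with ⟨q, hq, hsub⟩ | ⟨⟨α, hα, hαP⟩, ⟨β, hβ, hβP⟩⟩
  · exact absurd (hsub (hd q hq)) hdP
  refine ⟨fun hdx => hdP (hαP (hdx α hα)), β, hβ, fun w hw => ⟨?_, ?_⟩⟩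
  · obtain ⟨q, hq, hqβ, -⟩ := hβ.exists_suffix hw
    exact hd.of_isPath_not_mem hq fun hdq => hdP (hβP (hqβ.subset hdq))
  · rintro rfl
    exact hdP (hβP hw)

theorem IsNCA.dominates_of_not_dominates_fst (hz : IsNCA E s x y z) (hdy : Dominates E s d y)
    (hdx : ¬ Dominates E s d x) (hy : Reach E s y) : Dominates E s z d ∧ z ≠ d := by
  refine ⟨(hz.2.1.total hdy hy).resolve_right fun hdz => hdx (hdz.trans hz.1), ?_⟩
  rintro rfl
  exact hdx hz.1

theorem not_dominates_insert_of_deep_path {p : List V} (hz : IsNCA E s x y z)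
    (hzr : Reach E s z) (hlt : depth E s z < depth E s d) (hp : IsPath E y v p)
    (hdeep : ∀ w ∈ p, depth E s d < depth E s w) :
    ¬ Dominates (insert (x, y) E) s d v := by
  intro h
  have hdp : d ∉ p := fun hdp => (hdeep d hdp).false
  have hdy : Dominates (insert (x, y) E) s d y :=
    h.of_isPath_not_mem (hp.mono (Set.subset_insert _ _)) hdp
  have hdx : Dominates E s d x := hdy.of_insert_snd fun hdy => hdp (hdy ▸ hp.head_mem)
  have hdz : Dominates E s d z := hz.2.2 d hdx (hdy.of_superset (Set.subset_insert _ _))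
  exact absurd (depth_le_depth hdz hzr) hlt.not_ge

theorem immDom_insert_nca (hSC : StronglyConnected E) (hz : IsNCA E s x y z)
    (hdv : ImmDom E s d v) (hnd : ¬ Dominates (insert (x, y) E) s d v) :
    ImmDom (insert (x, y) E) s z v := by
  obtain ⟨hdx, p, hp, hdeep⟩ := exists_deep_path_of_not_dominates_insert hdv.1 hnd
  have hdy : Dominates E s d y := (hdeep y hp.head_mem).1
  obtain ⟨hzd, hzne⟩ := hz.dominates_of_not_dominates_fst hdy hdx (hSC s y)
  refine ⟨(hzd.trans hdv.1).insert_edge hz.1, ?_, fun w hw' hwv => ?_⟩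
  · rintro rfl
    exact hdv.2.1 (Dominates.antisymm (hSC s d) hdv.1 hzd)
  have hwd : Dominates E s w d := hdv.2.2 w (hw'.of_superset (Set.subset_insert _ _)) hwv
  have hwp : w ∉ p := fun hwp =>
    (hdeep w hwp).2 (Dominates.antisymm (hSC s d) (hdeep w hwp).1 hwd)
  have hwy : Dominates (insert (x, y) E) s w y :=
    hw'.of_isPath_not_mem (hp.mono (Set.subset_insert _ _)) hwp
  have hwx : Dominates E s w x := hwy.of_insert_snd fun hwy => hwp (hwy ▸ hp.head_mem)
  exact (hz.2.2 w hwx (hwd.trans hdy)).insert_edge hwx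

end Affected

theorem stmt6_general {V : Type*} (E : Set (V × V)) (s x y z v dv : V)
    (hSC : StronglyConnected E)
    (hz : IsNCA E s x y z) (hdv : ImmDom E s dv v) :
    ((¬ ImmDom (insert (x, y) E) s dv v) ↔
      (depth E s z < depth E s dv ∧
        ∃ p, IsPath E y v p ∧ ∀ w ∈ p, depth E s dv < depth E s w)) ∧
    (¬ ImmDom (insert (x, y) E) s dv v → ImmDom (insert (x, y) E) s z v) := by
  have hE : E ⊆ insert (x, y) E := Set.subset_insert _ _
  have affected_iff :
      ¬ ImmDom (insert (x, y) E) s dv v ↔ ¬ Dominates (insert (x, y) E) s dv v :=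
    ⟨fun h hd => h (hdv.of_superset hE hd (hSC s dv) (hSC.mono hE s v)), fun h hi => h hi.1⟩
  rw [affected_iff]
  refine ⟨⟨fun hnd => ?_, fun ⟨hlt, p, hp, hdeep⟩ =>
    not_dominates_insert_of_deep_path hz (hSC s z) hlt hp hdeep⟩,
    immDom_insert_nca hSC hz hdv⟩
  obtain ⟨hdx, p, hp, hdeep⟩ := exists_deep_path_of_not_dominates_insert hdv.1 hnd
  obtain ⟨hzd, hzne⟩ :=
    hz.dominates_of_not_dominates_fst (hdeep y hp.head_mem).1 hdx (hSC s y)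
  exact ⟨depth_lt_depth hzd hzne (hSC s z) (hSC s dv), p, hp, fun w hw =>
    depth_lt_depth (hdeep w hw).1 (hdeep w hw).2 (hSC s dv) (hSC s w)⟩

/-- a vertex `v ≠ s` with immediate dominator `dv` is affected by the
insertion of `(x,y)` (its immediate dominator changes) iff `depth z < depth dv`
and there is a path in `G` from `y` to `v` all of whose vertices are deeper than
`dv`; moreover, if `v` is affected then its new immediate dominator is `z = nca(x,y)`. -/
theorem stmt6 {V : Type*} (E : Set (V × V)) (s x y z v dv : V)
    (hSC : StronglyConnected E) (hv : v ≠ s)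
    (hz : IsNCA E s x y z) (hdv : ImmDom E s dv v) :
    ((¬ ImmDom (insert (x, y) E) s dv v) ↔
      (depth E s z < depth E s dv ∧
        ∃ p, IsPath E y v p ∧ ∀ w ∈ p, depth E s dv < depth E s w)) ∧
    (¬ ImmDom (insert (x, y) E) s dv v → ImmDom (insert (x, y) E) s z v) :=
  stmt6_general E s x y z v dv hSC hz hdv
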